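/- Let G be a graph without isolated vertices, and let M be a nontrivial, unbounded graph matroid family with rank function r, dimensionality d, and threshold t. Let k be an integer with k ≥ t. If the matroid M(G) is vertically (r(K_k) + 2)-connected, then G is (k+1)-connected. -/

import Mathlib

/-!
Common framework: graph matroid families.

A finite simple graph (without isolated vertices) is identified with its edge
set: a finite set of non-diagonal elements of `Sym2 ℕ`.  A graph matroid
family is encoded, following the paper, as a finitary matroid on the edge set
of the countable complete graph on `ℕ` that is invariant under all
permutations of `ℕ`.
-/

/-- The set of vertices covered by a set of edges. -/
def eSupp (E : Set (Sym2 ℕ)) : Set ℕ := {v : ℕ | ∃ e ∈ E, v ∈ e}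

/-- The edge set of the complete graph on the vertex set `V`. -/
def clique (V : Set ℕ) : Set (Sym2 ℕ) := {e : Sym2 ℕ | ¬ e.IsDiag ∧ ∀ v ∈ e, v ∈ V}

/-- The edge set of the complete graph `K_n` on the vertices `0, …, n-1`. -/
def cliqueN (n : ℕ) : Set (Sym2 ℕ) := clique {v : ℕ | v < n}

/-- `E` is (the edge set of) a finite simple graph. -/
def IsGraph (E : Set (Sym2 ℕ)) : Prop := E.Finite ∧ ∀ e ∈ E, ¬ e.IsDiag

/-- The degree of the vertex `v` in the edge set `E`. -/
noncomputable def deg (E : Set (Sym2 ℕ)) (v : ℕ) : ℕ := {e ∈ E | v ∈ e}.ncard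

/-- The minimum degree of (the graph with) edge set `E` (whose vertex set is `eSupp E`). -/
noncomputable def minDeg (E : Set (Sym2 ℕ)) : ℕ := sInf {k : ℕ | ∃ v ∈ eSupp E, deg E v = k}

/-- Deleting a set `S` of vertices from the graph with edge set `E`. -/
def deleteVerts (E : Set (Sym2 ℕ)) (S : Set ℕ) : Set (Sym2 ℕ) := {e ∈ E | ∀ v ∈ e, v ∉ S}

/-- The graph with edge set `E` is `k`-connected: it has more than `k` vertices and
deleting any set of fewer than `k` vertices leaves a connected graph. -/
def KConnected (k : ℕ) (E : Set (Sym2 ℕ)) : Prop :=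
  k < (eSupp E).ncard ∧
  ∀ S : Finset ℕ, S.card < k →
    ((SimpleGraph.fromEdgeSet E).induce (eSupp E \ ↑S)).Connected

/-- `E` is a forest. -/
def IsForest (E : Set (Sym2 ℕ)) : Prop := (SimpleGraph.fromEdgeSet E).IsAcyclic

/-- `E` is a matching: no two distinct edges of `E` share a vertex. -/
def IsMatching (E : Set (Sym2 ℕ)) : Prop :=
  ∀ e ∈ E, ∀ f ∈ E, e ≠ f → ∀ v : ℕ, v ∈ e → v ∉ f

/-- `E` is a star `K_{1,m}` with `m` edges. -/
def IsStar (m : ℕ) (E : Set (Sym2 ℕ)) : Prop :=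
  ∃ (c : ℕ) (L : Finset ℕ), c ∉ L ∧ L.card = m ∧ E = (fun x => s(c, x)) '' ↑L

/-- `C` is a cycle graph `C_n` for some `n ≥ 3`. -/
def IsCycleGraph (C : Set (Sym2 ℕ)) : Prop :=
  ∃ n : ℕ, 3 ≤ n ∧ ∃ f : ZMod n → ℕ, Function.Injective f ∧
    C = {e : Sym2 ℕ | ∃ i : ZMod n, e = s(f i, f (i + 1))}

/-- The rank of the set `X` in the matroid `M₀`: the supremum of the cardinalities of
independent subsets of `X` (as a natural number; all sets we use are finite). -/
noncomputable def mrk (M₀ : Matroid (Sym2 ℕ)) (X : Set (Sym2 ℕ)) : ℕ :=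
  sSup {n : ℕ | ∃ I ⊆ X, M₀.Indep I ∧ I.ncard = n}

/-- A vertical `k`-separation of the matroid `M₀`. -/
def VerticalSep (M₀ : Matroid (Sym2 ℕ)) (k : ℕ) (E₁ E₂ : Set (Sym2 ℕ)) : Prop :=
  Disjoint E₁ E₂ ∧ E₁ ∪ E₂ = M₀.E ∧
  k ≤ mrk M₀ E₁ ∧ k ≤ mrk M₀ E₂ ∧
  mrk M₀ E₁ + mrk M₀ E₂ + 1 ≤ mrk M₀ M₀.E + k

/-- The matroid `M₀` is vertically `k`-connected. -/
def VerticallyConnected (M₀ : Matroid (Sym2 ℕ)) (k : ℕ) : Prop :=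
  k ≤ mrk M₀ M₀.E ∧
  ∀ k' : ℕ, 0 < k' → k' < k → ∀ E₁ E₂ : Set (Sym2 ℕ), ¬ VerticalSep M₀ k' E₁ E₂

/-- A `d`-dimensional abstract rigidity matroid on the complete graph with vertex set `V`. -/
def IsARM (d : ℕ) (V : Set ℕ) (M₀ : Matroid (Sym2 ℕ)) : Prop :=
  M₀.E = clique V ∧
  (∀ E₁ E₂ : Set (Sym2 ℕ), E₁ ⊆ clique V → E₂ ⊆ clique V →
      (eSupp E₁ ∩ eSupp E₂).ncard < d →
      M₀.closure (E₁ ∪ E₂) = M₀.closure E₁ ∪ M₀.closure E₂) ∧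
  (∀ E₁ E₂ : Set (Sym2 ℕ), E₁ ⊆ clique V → E₂ ⊆ clique V →
      d ≤ (eSupp E₁ ∩ eSupp E₂).ncard →
      M₀.closure E₁ = clique (eSupp E₁) → M₀.closure E₂ = clique (eSupp E₂) →
      M₀.closure (E₁ ∪ E₂) = clique (eSupp E₁ ∪ eSupp E₂))

/-- The `d`-dimensional edge split operation: replace an edge `uv` of `G` by a new
vertex `w` joined to `u` and `v`, as well as to `d - 1` other vertices of `G`. -/
def EdgeSplit (d : ℕ) (G G' : Set (Sym2 ℕ)) : Prop :=
  ∃ (u v w : ℕ) (X : Finset ℕ),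
    s(u, v) ∈ G ∧ w ∉ eSupp G ∧ ↑X ⊆ eSupp G ∧ X.card = d - 1 ∧ u ∉ X ∧ v ∉ X ∧
    G' = (G \ {s(u, v)}) ∪ {s(w, u), s(w, v)} ∪ ((fun x => s(w, x)) '' ↑X)

/-- A graph matroid family: a finitary matroid on the edge set of the countable
complete graph on `ℕ`, invariant under all permutations of `ℕ`. -/
structure GraphMatroidFamily where
  /-- The underlying matroid on the edge set of `K_ℕ`. -/
  M : Matroid (Sym2 ℕ)
  ground_eq : M.E = {e : Sym2 ℕ | ¬ e.IsDiag}
  finitary : M.Finitary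
  invariant : ∀ σ : Equiv.Perm ℕ, ∀ I : Set (Sym2 ℕ),
    M.Indep I → M.Indep (Sym2.map σ '' I)

namespace GraphMatroidFamily

variable (M : GraphMatroidFamily)

/-- The rank function of the family: `M.rk E` is the rank of the matroid `M(G)` for
any graph `G` whose edge set contains `E`. -/
noncomputable def rk (E : Set (Sym2 ℕ)) : ℕ := mrk M.M E

/-- A set of edges (a graph) is `M`-independent. -/
def Indep (E : Set (Sym2 ℕ)) : Prop := M.M.Indep E

/-- `C` is an `M`-circuit: a graph that is not `M`-independent, but such that deleting
any single edge from it yields an `M`-independent graph. -/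
def IsCircuit (C : Set (Sym2 ℕ)) : Prop :=
  IsGraph C ∧ ¬ M.Indep C ∧ ∀ e ∈ C, M.Indep (C \ {e})

/-- The graph with edge set `E` is `M`-rigid. -/
def Rigid (E : Set (Sym2 ℕ)) : Prop := M.rk E = M.rk (clique (eSupp E))

/-- The graph with vertex set `V` and edge set `E` is `M`-rigid. -/
def RigidOn (V : Set ℕ) (E : Set (Sym2 ℕ)) : Prop := M.rk E = M.rk (clique V)

/-- `M` is trivial if every (finite, simple) graph is `M`-independent. -/
def Trivial : Prop := ∀ E : Set (Sym2 ℕ), IsGraph E → M.Indep E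

/-- `M` is unbounded: the sequence `r(K_n)` is unbounded. -/
def Unbounded : Prop := ∀ B : ℕ, ∃ n : ℕ, B < M.rk (cliqueN n)

/-- `M` is bounded: the sequence `r(K_n)` is bounded. -/
def Bounded : Prop := ∃ B : ℕ, ∀ n : ℕ, M.rk (cliqueN n) ≤ B

/-- For a bounded family, `m` is the rank `r(M)` of `M`: the maximum (limit) of the
monotone sequence `r(K_n)`. -/
def HasRank (m : ℕ) : Prop :=
  (∀ n : ℕ, M.rk (cliqueN n) ≤ m) ∧ ∃ n : ℕ, M.rk (cliqueN n) = m

/-- `d` is the dimensionality of (the nontrivial family) `M`: the least `d` such that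
there is an `M`-circuit with minimum degree `d + 1`. -/
def IsDimensionality (d : ℕ) : Prop :=
  IsLeast {d : ℕ | ∃ C, M.IsCircuit C ∧ minDeg C = d + 1} d

/-- `t` is the threshold of (the nontrivial family) `M` with dimensionality `d`:
the least value of `|V(C)| - 1` over all `M`-circuits `C` with minimum degree `d + 1`. -/
def IsThreshold (d t : ℕ) : Prop :=
  IsLeast {t : ℕ | ∃ C, M.IsCircuit C ∧ minDeg C = d + 1 ∧ (eSupp C).ncard = t + 1} t

/-- `M` has the Lovász–Yemini property. -/
def LovaszYemini : Prop :=
  ∃ c : ℕ, ∀ E : Set (Sym2 ℕ), IsGraph E → KConnected c E → M.Rigid E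

/-- `ψ` is an isomorphism between the matroids `M(G)` and `M(H)`. -/
def MatroidIso (G H : Set (Sym2 ℕ)) (ψ : Sym2 ℕ → Sym2 ℕ) : Prop :=
  Set.BijOn ψ G H ∧ ∀ S ⊆ G, (M.Indep S ↔ M.Indep (ψ '' S))

/-- `G` is `M`-reconstructible: every isomorphism between `M(G)` and `M(H)` (for a graph
`H` without isolated vertices) is induced by a graph isomorphism. -/
def Reconstructible (G : Set (Sym2 ℕ)) : Prop :=
  ∀ H : Set (Sym2 ℕ), IsGraph H → ∀ ψ : Sym2 ℕ → Sym2 ℕ, M.MatroidIso G H ψ →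
    ∃ φ : ℕ → ℕ, Set.BijOn φ (eSupp G) (eSupp H) ∧ ∀ e ∈ G, ψ e = Sym2.map φ e

/-- `M` has the Whitney property. -/
def Whitney : Prop :=
  ∃ c : ℕ, ∀ E : Set (Sym2 ℕ), IsGraph E → KConnected c E → M.Reconstructible E

/-- `M` is the union of the graph matroid families `Ms`. -/
def IsUnionOf {k : ℕ} (Ms : Fin k → GraphMatroidFamily) : Prop :=
  ∀ I : Set (Sym2 ℕ),
    M.Indep I ↔ ∃ Is : Fin k → Set (Sym2 ℕ), (∀ i, (Ms i).Indep (Is i)) ∧ I = ⋃ i, Is i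

/-- `M` is a family of `d`-dimensional abstract rigidity matroids. -/
def FamilyOfARM (d : ℕ) : Prop :=
  ∀ n : ℕ, d ≤ n → IsARM d {v : ℕ | v < n} (M.M.restrict (cliqueN n))

/-- `M` is `1`-extendable: its dimensionality `d` is finite and positive, and the
`d`-dimensional edge split operation preserves `M`-independence. -/
def OneExtendable : Prop :=
  ∃ d : ℕ, 0 < d ∧ M.IsDimensionality d ∧
    ∀ G G' : Set (Sym2 ℕ), IsGraph G → M.Indep G → EdgeSplit d G G' → M.Indep G'

/-- `G` is `k`-vertex-redundantly `M`-rigid. -/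
def VertexRedundantlyRigid (k : ℕ) (G : Set (Sym2 ℕ)) : Prop :=
  M.Rigid G ∧ ∀ S : Finset ℕ, ↑S ⊆ eSupp G → S.card ≤ k →
    M.RigidOn (eSupp G \ ↑S) (deleteVerts G ↑S)

end GraphMatroidFamily

/-!
If `G` is not `(k+1)`-connected, a set `S` of at most `k` vertices cuts off a set `A` of vertices
from the rest of `G` (if `G` has at most `k + 1` vertices, take a single vertex for `A` and the
others for `S`). The edges `E₁` meeting `A` and the edges `E₂` avoiding `A` share only vertices
of `S`, and both have rank `< r(G)`. A side missing a vertex of `G` is not spanning, because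
`d ≥ 1` (as `M` is unbounded) and circuits have minimum degree `≥ d + 1`, so an edge at a vertex
of degree `< d` is never spanned; in the small case `E₁` has at most `k ≤ r(K_k) + 1` edges.

The key estimate is `r(E₁) + r(E₂) ≤ r(G) + r(K_k)`. Relabelling a threshold circuit shows
that a clique on `W`, `|W| ≥ t`, together with `d` edges from a new vertex `x` to `W` spans
every edge from `x` to `W`; hence adding a new vertex to a clique on at least `t` vertices
raises the rank of anything by exactly `d`. Growing the clique on `S` (padded to `k` vertices)
by the remaining vertices of `E₁` and applying submodularity gives the estimate, so `(E₁, E₂)`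
is a vertical `k'`-separation for `k' = r(E₁) + r(E₂) + 1 - r(G) ≤ r(K_k) + 1`.
-/

open Set

section Rank

variable {M₀ : Matroid (Sym2 ℕ)} {X Y : Set (Sym2 ℕ)}

lemma natCast_mrk (hX : M₀.IsRkFinite X) : (mrk M₀ X : ℕ∞) = M₀.eRk X := by
  obtain ⟨r, hr⟩ := ENat.ne_top_iff_exists.1 hX.eRk_lt_top.ne
  have hset : {n : ℕ | ∃ I ⊆ X, M₀.Indep I ∧ I.ncard = n} = Iic r := by
    ext n
    rw [mem_Iic, ← Nat.cast_le (α := ℕ∞), hr, Matroid.le_eRk_iff]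
    refine ⟨fun ⟨I, hIX, hI, hn⟩ => ⟨I, hIX, hI, ?_⟩,
      fun ⟨I, hIX, hI, hn⟩ => ⟨I, hIX, hI, ?_⟩⟩
    · rw [← hn, (hX.finite_of_indep_subset hI hIX).cast_ncard_eq]
    · rw [← Nat.cast_inj (R := ℕ∞), (finite_of_encard_eq_coe hn).cast_ncard_eq, hn]
  rw [mrk, hset, csSup_Iic, hr]

lemma natCast_mrk_of_finite (hX : X.Finite) : (mrk M₀ X : ℕ∞) = M₀.eRk X :=
  natCast_mrk (M₀.isRkFinite_of_finite hX)

lemma mrk_mono (hY : Y.Finite) (hXY : X ⊆ Y) : mrk M₀ X ≤ mrk M₀ Y := by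
  have := M₀.eRk_mono hXY
  rwa [← natCast_mrk_of_finite hY, ← natCast_mrk_of_finite (hY.subset hXY), Nat.cast_le] at this

lemma mrk_le_ncard (hX : X.Finite) : mrk M₀ X ≤ X.ncard := by
  have := M₀.eRk_le_encard X
  rwa [← natCast_mrk_of_finite hX, ← hX.cast_ncard_eq, Nat.cast_le] at this

lemma mrk_union_le (hX : X.Finite) (hY : Y.Finite) :
    mrk M₀ (X ∪ Y) ≤ mrk M₀ X + mrk M₀ Y := by
  have := M₀.eRk_union_le_eRk_add_eRk X Y
  rwa [← natCast_mrk_of_finite hX, ← natCast_mrk_of_finite hY,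
    ← natCast_mrk_of_finite (hX.union hY), ← Nat.cast_add, Nat.cast_le] at this

lemma mrk_union_add_mrk_inter_le (hX : X.Finite) (hY : Y.Finite) :
    mrk M₀ (X ∪ Y) + mrk M₀ (X ∩ Y) ≤ mrk M₀ X + mrk M₀ Y := by
  have := M₀.eRk_inter_add_eRk_union_le X Y
  rwa [← natCast_mrk_of_finite hX, ← natCast_mrk_of_finite hY,
    ← natCast_mrk_of_finite (hX.union hY), ← natCast_mrk_of_finite (hX.inter_of_left Y),
    ← Nat.cast_add, ← Nat.cast_add, Nat.cast_le, add_comm] at this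

lemma mrk_union_eq_of_subset_closure (hX : X.Finite) (hY : Y.Finite)
    (hYX : Y ⊆ M₀.closure X) : mrk M₀ (X ∪ Y) = mrk M₀ X := by
  have h : M₀.eRk (X ∪ Y) = M₀.eRk X := by
    refine le_antisymm ?_ (M₀.eRk_mono subset_union_left)
    calc M₀.eRk (X ∪ Y) ≤ M₀.eRk (X ∪ M₀.closure X) :=
          M₀.eRk_mono (union_subset_union_right _ hYX)
      _ = M₀.eRk X := by rw [Matroid.eRk_union_closure_right_eq, union_self]
  rwa [← natCast_mrk_of_finite hX, ← natCast_mrk_of_finite (hX.union hY), Nat.cast_inj] at h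

lemma mrk_insert_eq_add_one (hX : X.Finite) {e : Sym2 ℕ} (he : e ∈ M₀.E \ M₀.closure X) :
    mrk M₀ (insert e X) = mrk M₀ X + 1 := by
  have := Matroid.eRk_insert_eq_add_one he
  rwa [← natCast_mrk_of_finite hX, ← natCast_mrk_of_finite (hX.insert e), ← Nat.cast_add_one,
    Nat.cast_inj] at this

lemma mrk_restrict {G : Set (Sym2 ℕ)} (hXG : X ⊆ G) : mrk (M₀.restrict G) X = mrk M₀ X := by
  unfold mrk
  congr 1
  ext n
  simp only [Matroid.restrict_indep_iff]
  exact ⟨fun ⟨I, hIX, hI, hn⟩ => ⟨I, hIX, hI.1, hn⟩,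
    fun ⟨I, hIX, hI, hn⟩ => ⟨I, hIX, ⟨hI, hIX.trans hXG⟩, hn⟩⟩

end Rank

def starEdges (x : ℕ) (N : Set ℕ) : Set (Sym2 ℕ) := (fun u => s(x, u)) '' N

def nbhd (E : Set (Sym2 ℕ)) (v : ℕ) : Set ℕ := {u | s(v, u) ∈ E}

section Graph

variable {E F : Set (Sym2 ℕ)} {V W N : Set ℕ} {u v x : ℕ}

lemma eSupp_union : eSupp (E ∪ F) = eSupp E ∪ eSupp F := by
  ext v
  simp only [eSupp, mem_union, mem_ofPred_eq, or_and_right, exists_or]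

lemma eSupp_finite (hE : E.Finite) : (eSupp E).Finite := by
  refine (hE.biUnion fun e _ => (?_ : {v | v ∈ e}.Finite)).subset
    fun v ⟨e, he, hv⟩ => mem_biUnion he hv
  induction e with
  | _ a b => exact (toFinite {a, b}).subset fun v hv => by simpa [Sym2.mem_iff] using hv

lemma eSupp_nonempty (hE : E.Nonempty) : (eSupp E).Nonempty := by
  obtain ⟨e, he⟩ := hE
  induction e with
  | _ a b => exact ⟨a, s(a, b), he, Sym2.mem_mk_left a b⟩

lemma clique_mono (h : V ⊆ W) : clique V ⊆ clique W :=
  fun _ he => ⟨he.1, fun v hv => h (he.2 v hv)⟩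

lemma clique_finite (hV : V.Finite) : (clique V).Finite := by
  refine ((hV.prod hV).image fun p => s(p.1, p.2)).subset fun e he => ?_
  induction e with
  | _ a b =>
    exact ⟨(a, b), ⟨he.2 a (Sym2.mem_mk_left a b), he.2 b (Sym2.mem_mk_right a b)⟩, rfl⟩

lemma eSupp_clique_subset (V : Set ℕ) : eSupp (clique V) ⊆ V :=
  fun v ⟨_, he, hv⟩ => he.2 v hv

lemma image_clique {f : ℕ → ℕ} (hf : Function.Injective f) (V : Set ℕ) :
    Sym2.map f '' clique V = clique (f '' V) := by
  ext e
  constructor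
  · rintro ⟨e, ⟨hnd, hV⟩, rfl⟩
    refine ⟨(Sym2.isDiag_map hf).not.2 hnd, fun v hv => ?_⟩
    obtain ⟨a, ha, rfl⟩ := Sym2.mem_map.1 hv
    exact mem_image_of_mem f (hV a ha)
  · induction e with
    | _ a b =>
      rintro ⟨hnd, hV⟩
      obtain ⟨a, ha, rfl⟩ := hV _ (Sym2.mem_mk_left _ _)
      obtain ⟨b, hb, rfl⟩ := hV _ (Sym2.mem_mk_right _ _)
      refine ⟨s(a, b), ⟨fun h => hnd ?_, fun v hv => ?_⟩, Sym2.map_mk f a b⟩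
      · rw [Sym2.mk_isDiag_iff] at h ⊢
        rw [h]
      · rcases Sym2.mem_iff.1 hv with rfl | rfl <;> assumption

lemma clique_insert (hx : x ∉ V) : clique (insert x V) = clique V ∪ starEdges x V := by
  ext e
  induction e with
  | _ a b =>
    simp only [clique, starEdges, mem_ofPred_eq, mem_union, mem_image, Sym2.mk_isDiag_iff,
      Sym2.mem_iff, forall_eq_or_imp, forall_eq, mem_insert_iff, Sym2.eq_iff]
    constructor
    · rintro ⟨hab, rfl | ha, rfl | hb⟩
      · exact absurd rfl hab
      · exact Or.inr ⟨b, hb, Or.inl ⟨rfl, rfl⟩⟩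
      · exact Or.inr ⟨a, ha, Or.inr ⟨rfl, rfl⟩⟩
      · exact Or.inl ⟨hab, ha, hb⟩
    · rintro (⟨hab, ha, hb⟩ | ⟨u, hu, ⟨rfl, rfl⟩ | ⟨rfl, rfl⟩⟩)
      · exact ⟨hab, Or.inr ha, Or.inr hb⟩
      · exact ⟨fun h => hx (h ▸ hu), Or.inl rfl, Or.inr hu⟩
      · exact ⟨fun h => hx (h ▸ hu), Or.inr hu, Or.inl rfl⟩

lemma starEdges_finite (hN : N.Finite) (x : ℕ) : (starEdges x N).Finite := hN.image _

lemma starEdges_mono (x : ℕ) (h : N ⊆ W) : starEdges x N ⊆ starEdges x W := image_mono h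

lemma ncard_starEdges (x : ℕ) (N : Set ℕ) : (starEdges x N).ncard = N.ncard :=
  ncard_image_of_injective N fun _ _ h => Sym2.congr_right.1 h

lemma starEdges_insert (x u : ℕ) (N : Set ℕ) :
    starEdges x (insert u N) = insert s(x, u) (starEdges x N) :=
  image_insert_eq

lemma image_starEdges (f : ℕ → ℕ) (x : ℕ) (N : Set ℕ) :
    Sym2.map f '' starEdges x N = starEdges (f x) (f '' N) := by
  simp only [starEdges, image_image, Sym2.map_mk]

lemma starEdges_subset_ground (hxN : x ∉ N) : starEdges x N ⊆ {e | ¬ e.IsDiag} := by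
  rintro _ ⟨u, hu, rfl⟩ h
  exact hxN (Sym2.mk_isDiag_iff.1 h ▸ hu)

lemma sep_mem_eq_starEdges_nbhd (E : Set (Sym2 ℕ)) (v : ℕ) :
    {e ∈ E | v ∈ e} = starEdges v (nbhd E v) := by
  ext e
  constructor
  · rintro ⟨he, hve⟩
    obtain ⟨u, rfl⟩ := Sym2.mem_iff_exists.1 hve
    exact ⟨u, he, rfl⟩
  · rintro ⟨u, hu, rfl⟩
    exact ⟨hu, Sym2.mem_mk_left v u⟩

lemma deg_eq_ncard_nbhd (E : Set (Sym2 ℕ)) (v : ℕ) : deg E v = (nbhd E v).ncard := by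
  rw [deg, sep_mem_eq_starEdges_nbhd, ncard_starEdges]

lemma nbhd_subset_eSupp : nbhd E v ⊆ eSupp E := fun u hu => ⟨_, hu, Sym2.mem_mk_right v u⟩

lemma notMem_nbhd_self (hE : ∀ e ∈ E, ¬ e.IsDiag) : v ∉ nbhd E v :=
  fun h => hE _ h (Sym2.mk_isDiag_iff.2 rfl)

lemma subset_starEdges_nbhd_union_clique (hE : ∀ e ∈ E, ¬ e.IsDiag) (v : ℕ) :
    E ⊆ starEdges v (nbhd E v) ∪ clique (eSupp E \ {v}) := by
  intro e he
  by_cases hve : v ∈ e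
  · exact Or.inl (sep_mem_eq_starEdges_nbhd E v ▸ ⟨he, hve⟩)
  · exact Or.inr ⟨hE e he, fun u hu => ⟨⟨e, he, hu⟩, fun h => hve (h ▸ hu)⟩⟩

lemma deg_mono (hF : F.Finite) (h : E ⊆ F) : deg E v ≤ deg F v :=
  ncard_le_ncard (fun _ he => ⟨h he.1, he.2⟩) (hF.subset fun _ he => he.1)

lemma deg_insert_le (hE : E.Finite) (e : Sym2 ℕ) (v : ℕ) :
    deg (insert e E) v ≤ deg E v + 1 := by
  refine (ncard_le_ncard (t := insert e {f ∈ E | v ∈ f}) ?_ ((hE.sep _).insert e)).trans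
    (ncard_insert_le _ _)
  rintro f ⟨rfl | hf, hvf⟩
  exacts [mem_insert f _, mem_insert_of_mem e ⟨hf, hvf⟩]

lemma deg_eq_zero_of_notMem_eSupp (hv : v ∉ eSupp E) : deg E v = 0 := by
  have h : {e ∈ E | v ∈ e} = ∅ := eq_empty_of_forall_notMem fun e he => hv ⟨e, he⟩
  rw [deg, h, ncard_empty]

lemma mem_starEdges_iff : s(x, u) ∈ starEdges x N ↔ u ∈ N :=
  (Function.Injective.mem_set_image fun _ _ h => Sym2.congr_right.1 h)

lemma deg_union_starEdges (hx : x ∉ eSupp E) (N : Set ℕ) :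
    deg (E ∪ starEdges x N) x = N.ncard := by
  rw [deg_eq_ncard_nbhd]
  congr 1
  ext u
  refine ⟨fun h => ?_, fun h => Or.inr (mem_starEdges_iff.2 h)⟩
  rcases h with h | h
  exacts [absurd ⟨_, h, Sym2.mem_mk_left x u⟩ hx, mem_starEdges_iff.1 h]

lemma minDeg_le_deg (hv : v ∈ eSupp E) : minDeg E ≤ deg E v := Nat.sInf_le ⟨v, hv, rfl⟩

lemma exists_deg_eq_minDeg (hE : (eSupp E).Nonempty) : ∃ v ∈ eSupp E, deg E v = minDeg E :=
  Nat.sInf_mem (hE.image (deg E))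

end Graph

section Perm

lemma exists_perm_eqOn {s : Set ℕ} (hs : s.Finite) {f : ℕ → ℕ} (hf : InjOn f s) :
    ∃ σ : Equiv.Perm ℕ, EqOn σ f s := by
  classical
  have : Infinite (sᶜ : Set ℕ) := hs.infinite_compl.to_subtype
  have : Infinite ((f '' s)ᶜ : Set ℕ) := (hs.image f).infinite_compl.to_subtype
  let e : (sᶜ : Set ℕ) ≃ ((f '' s)ᶜ : Set ℕ) :=
    (Denumerable.ofEncodableOfInfinite _).eqv.trans (Denumerable.ofEncodableOfInfinite _).eqv.symm
  refine ⟨(Equiv.Set.sumCompl s).symm.trans (((Equiv.Set.imageOfInjOn f s hf).sumCongr e).trans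
      (Equiv.Set.sumCompl (f '' s))), fun x hx => ?_⟩
  simp [Equiv.Set.sumCompl_symm_apply_of_mem hx, Equiv.Set.imageOfInjOn]

lemma Set.InjOn.exists_extend {α β : Type*} [Nonempty β] {A B : Set α} {B' : Set β}
    {f : α → β} (hf : InjOn f A) (hfA : MapsTo f A B') (hAB : A ⊆ B) (hB : B.Finite)
    (hB' : B'.Finite) (hcard : B.ncard ≤ B'.ncard) :
    ∃ g : α → β, EqOn g f A ∧ InjOn g B ∧ MapsTo g B B' := by
  classical
  have hle : (B \ A).ncard ≤ (B' \ f '' A).ncard := by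
    rw [ncard_sdiff hAB (hB.subset hAB), ncard_sdiff (image_subset_iff.2 hfA) (hB'.subset
      (image_subset_iff.2 hfA)), hf.ncard_image]
    omega
  obtain ⟨h, hmaps, hinj⟩ := hB.sdiff.exists_injOn_of_encard_le (t := B' \ f '' A) (by
    rw [← hB.sdiff.cast_ncard_eq, ← hB'.sdiff.cast_ncard_eq]
    exact_mod_cast hle)
  have hgh : EqOn (A.piecewise f h) h (B \ A) := fun y hy => piecewise_eq_of_notMem _ _ _ hy.2
  refine ⟨A.piecewise f h, piecewise_eqOn A f h, ?_, fun y hy => ?_⟩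
  · rw [← union_sdiff_cancel hAB, injOn_union disjoint_sdiff_right]
    refine ⟨hf.congr (piecewise_eqOn A f h).symm, hinj.congr hgh.symm, fun a ha b hb hab => ?_⟩
    rw [piecewise_eq_of_mem _ _ _ ha, hgh hb] at hab
    exact (hmaps hb).2 (hab ▸ mem_image_of_mem f ha)
  · by_cases hyA : y ∈ A
    · rw [piecewise_eq_of_mem _ _ _ hyA]
      exact hfA hyA
    · rw [hgh ⟨hy, hyA⟩]
      exact (hmaps ⟨hy, hyA⟩).1

lemma exists_perm_relabel {P Q T W : Set ℕ} {v x : ℕ} (hP : P.Finite) (hW : W.Finite)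
    (hv : v ∈ P) (hQP : Q ⊆ P) (hvQ : v ∉ Q) (hTW : T ⊆ W) (hxW : x ∉ W)
    (hQT : Q.ncard = T.ncard) (hPW : P.ncard ≤ W.ncard + 1) :
    ∃ σ : Equiv.Perm ℕ, σ v = x ∧ σ '' Q = T ∧ σ '' (P \ {v}) ⊆ W := by
  have hQ : Q.Finite := hP.subset hQP
  have hT : T.Finite := hW.subset hTW
  have hxT : x ∉ T := fun h => hxW (hTW h)
  have hcard : (insert v Q).ncard = (insert x T).ncard := by
    rw [ncard_insert_of_notMem hvQ hQ, ncard_insert_of_notMem hxT hT, hQT]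
  -- Map `v` to `x`, then `Q` into `T`, then the rest of `P` into `W`.
  obtain ⟨φ₁, hφ₁v, hφ₁inj, hφ₁maps⟩ :=
    (injOn_singleton (fun _ => x) v).exists_extend (B := insert v Q)
      (mapsTo_singleton.2 (mem_insert x T)) (singleton_subset_iff.2 (mem_insert v Q))
      (hQ.insert v) (hT.insert x) hcard.le
  obtain ⟨φ, hφφ₁, hφinj, hφmaps⟩ := hφ₁inj.exists_extend
    (hφ₁maps.mono_right (insert_subset_insert hTW)) (insert_subset hv hQP) hP (hW.insert x)
    (by rwa [ncard_insert_of_notMem hxW hW])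
  obtain ⟨σ, hσ⟩ := exists_perm_eqOn hP hφinj
  have hσφ₁ : EqOn σ φ₁ (insert v Q) := (hσ.mono (insert_subset hv hQP)).trans hφφ₁
  have hσv : σ v = x := (hσφ₁ (mem_insert v Q)).trans (hφ₁v rfl)
  refine ⟨σ, hσv, ?_, ?_⟩
  · have himg : σ '' insert v Q = insert x T := by
      rw [hσφ₁.image_eq]
      exact eq_of_subset_of_ncard_le hφ₁maps.image_subset
        (by rw [hφ₁inj.ncard_image, hcard]) (hT.insert x)
    rw [image_insert_eq, hσv] at himg
    have hxQ : x ∉ σ '' Q :=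
      fun ⟨b, hb, hbx⟩ => hvQ (σ.injective (hbx.trans hσv.symm) ▸ hb)
    rw [← insert_sdiff_self_of_notMem hxQ, himg, insert_sdiff_self_of_notMem hxT]
  · rintro _ ⟨z, ⟨hz, hzv⟩, rfl⟩
    rcases hσ hz ▸ hφmaps hz with h | h
    · exact absurd (σ.injective (h.trans hσv.symm)) hzv
    · exact h

end Perm

def CutsOff (G : Set (Sym2 ℕ)) (S A : Set ℕ) : Prop :=
  ∀ a z, s(a, z) ∈ G → a ∈ A → z ∉ S → z ∈ A

section Separation

variable {G : Set (Sym2 ℕ)} {A S : Set ℕ}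

lemma notMem_eSupp_deleteVerts {a : ℕ} (ha : a ∈ A) : a ∉ eSupp (deleteVerts G A) :=
  fun ⟨_, he, hae⟩ => he.2 a hae ha

lemma eSupp_sdiff_deleteVerts_subset (hA : CutsOff G S A) :
    eSupp (G \ deleteVerts G A) ⊆ A ∪ S := by
  rintro z ⟨e, ⟨heG, hne⟩, hz⟩
  obtain ⟨a, hae, haA⟩ : ∃ a ∈ e, a ∈ A := by
    by_contra! h
    exact hne ⟨heG, h⟩
  obtain ⟨w, rfl⟩ := Sym2.mem_iff_exists.1 hae
  rcases Sym2.mem_iff.1 hz with rfl | rfl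
  · exact Or.inl haA
  · exact (em (z ∈ S)).elim Or.inr fun hzS => Or.inl (hA a z heG haA hzS)

lemma eSupp_deleteVerts_inter_subset (hA : CutsOff G S A) :
    eSupp (deleteVerts G A) ∩ eSupp (G \ deleteVerts G A) ⊆ S :=
  fun _ ⟨h₁, h₂⟩ => (eSupp_sdiff_deleteVerts_subset hA h₂).resolve_left
    fun hz => notMem_eSupp_deleteVerts hz h₁

lemma exists_cutsOff_of_not_preconnected
    (h : ¬ ((SimpleGraph.fromEdgeSet G).induce (eSupp G \ S)).Preconnected) :
    ∃ A : Set ℕ, ∃ u ∈ eSupp G \ S, ∃ v ∈ eSupp G \ S,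
      u ∈ A ∧ v ∉ A ∧ CutsOff G S A := by
  simp only [SimpleGraph.Preconnected, not_forall] at h
  obtain ⟨u, v, huv⟩ := h
  refine ⟨{z | ∃ hz : z ∈ eSupp G \ S, ((SimpleGraph.fromEdgeSet G).induce
    (eSupp G \ S)).Reachable u ⟨z, hz⟩}, u, u.2, v, v.2, ⟨u.2, .refl _⟩,
    fun ⟨_, h⟩ => huv h, ?_⟩
  rintro a z haz ⟨ha, hua⟩ hzS
  by_cases haz' : a = z
  · exact haz' ▸ ⟨ha, hua⟩
  refine ⟨⟨⟨_, haz, Sym2.mem_mk_right a z⟩, hzS⟩,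
    hua.trans (SimpleGraph.Adj.reachable ?_)⟩
  simp [haz, haz']

lemma sdiff_deleteVerts_singleton_subset (hG : ∀ e ∈ G, ¬ e.IsDiag) (a : ℕ) :
    G \ deleteVerts G {a} ⊆ starEdges a (eSupp G \ {a}) := by
  rintro e ⟨heG, hne⟩
  have hae : a ∈ e := by_contra fun h => hne ⟨heG, fun v hv hva => h (hva ▸ hv)⟩
  obtain ⟨w, rfl⟩ := Sym2.mem_iff_exists.1 hae
  refine ⟨w, ⟨⟨_, heG, Sym2.mem_mk_right a w⟩, fun hw => hG _ heG ?_⟩, rfl⟩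
  rw [Sym2.mk_isDiag_iff, hw]

end Separation

namespace GraphMatroidFamily

variable {M : GraphMatroidFamily} {d t : ℕ} {C X : Set (Sym2 ℕ)} {W : Set ℕ}

lemma indep_image_iff (σ : Equiv.Perm ℕ) {I : Set (Sym2 ℕ)} :
    M.M.Indep (Sym2.map σ '' I) ↔ M.M.Indep I := by
  refine ⟨fun h => ?_, M.invariant σ I⟩
  simpa [image_image, Sym2.map_map] using M.invariant σ.symm _ h

lemma mrk_image (σ : Equiv.Perm ℕ) (X : Set (Sym2 ℕ)) :
    mrk M.M (Sym2.map σ '' X) = mrk M.M X := by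
  have hinj : Function.Injective (Sym2.map σ) := Sym2.map.injective σ.injective
  unfold mrk
  congr 1
  ext n
  constructor
  · rintro ⟨I, hI, hInd, rfl⟩
    obtain ⟨J, hJX, rfl⟩ := subset_image_iff.1 hI
    exact ⟨J, hJX, (indep_image_iff σ).1 hInd, (ncard_image_of_injective J hinj).symm⟩
  · rintro ⟨J, hJX, hJ, rfl⟩
    exact ⟨_, image_mono hJX, M.invariant σ J hJ, ncard_image_of_injective J hinj⟩

lemma mrk_clique {V : Set ℕ} (hV : V.Finite) : mrk M.M (clique V) = M.rk (cliqueN V.ncard) := by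
  obtain ⟨f, hf⟩ := hV.exists_bijOn_of_encard_eq (t := Iio V.ncard) (by
    rw [← hV.cast_ncard_eq, ← (finite_Iio _).cast_ncard_eq, ncard_Iio_nat])
  obtain ⟨σ, hσ⟩ := exists_perm_eqOn hV hf.injOn
  rw [← mrk_image σ, image_clique σ.injective, hσ.image_eq, hf.image_eq]
  rfl

lemma isCircuit_iff : M.IsCircuit C ↔ M.M.IsCircuit C := by
  have : M.M.Finitary := M.finitary
  refine ⟨fun ⟨hC, hdep, hmin⟩ => ?_, fun hC => ⟨⟨hC.finite, ?_⟩, hC.not_indep,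
    fun e he => hC.sdiff_singleton_indep he⟩⟩
  · rw [Matroid.isCircuit_iff_dep_forall_sdiff_singleton_indep, Matroid.Dep, M.ground_eq]
    exact ⟨⟨hdep, hC.2⟩, hmin⟩
  · simpa [M.ground_eq, subset_def] using hC.subset_ground

lemma IsCircuit.nonempty (hC : M.IsCircuit C) : C.Nonempty :=
  nonempty_iff_ne_empty.2 fun h => hC.2.1 (h ▸ M.M.empty_indep)

lemma IsCircuit.image (hC : M.IsCircuit C) (σ : Equiv.Perm ℕ) :
    M.IsCircuit (Sym2.map σ '' C) := by
  refine ⟨⟨hC.1.1.image _, ?_⟩, mt (indep_image_iff σ).1 hC.2.1, ?_⟩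
  · rintro _ ⟨e, he, rfl⟩
    exact (Sym2.isDiag_map σ.injective).not.2 (hC.1.2 e he)
  · rintro _ ⟨e, he, rfl⟩
    rw [← image_singleton, ← image_sdiff (Sym2.map.injective σ.injective)]
    exact (indep_image_iff σ).2 (hC.2.2 e he)

lemma IsCircuit.add_one_le_deg (hd : M.IsDimensionality d) (hC : M.IsCircuit C) {v : ℕ}
    (hv : v ∈ eSupp C) : d + 1 ≤ deg C v := by
  obtain ⟨u, ⟨e, he, hue⟩, hu⟩ := exists_deg_eq_minDeg ⟨v, hv⟩
  have hpos : 0 < deg C u := (ncard_pos (hC.1.1.sep _)).2 ⟨e, he, hue⟩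
  have := hd.2 ⟨C, hC, (Nat.sub_add_cancel (hu ▸ hpos)).symm⟩
  have := minDeg_le_deg hv
  omega

lemma notMem_closure_of_deg_lt (hd : M.IsDimensionality d) (hX : X.Finite) {e : Sym2 ℕ}
    {x : ℕ} (hx : x ∈ e) (heX : e ∉ X) (hdeg : deg X x < d) : e ∉ M.M.closure X := by
  intro h
  obtain ⟨C, hCX, hC, heC⟩ := Matroid.exists_isCircuit_of_mem_closure h heX
  have h₁ := (isCircuit_iff.2 hC).add_one_le_deg hd ⟨e, heC, hx⟩
  have h₂ := deg_mono (hX.insert e) hCX (v := x)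
  have h₃ := deg_insert_le hX e x
  omega

lemma mrk_insert_of_deg_lt (hd : M.IsDimensionality d) (hX : X.Finite) {e : Sym2 ℕ} {x : ℕ}
    (he : ¬ e.IsDiag) (hx : x ∈ e) (heX : e ∉ X) (hdeg : deg X x < d) :
    mrk M.M (insert e X) = mrk M.M X + 1 :=
  mrk_insert_eq_add_one hX ⟨M.ground_eq ▸ he, notMem_closure_of_deg_lt hd hX hx heX hdeg⟩

lemma mrk_union_starEdges (hd : M.IsDimensionality d) (hX : X.Finite) {x : ℕ}
    (hx : x ∉ eSupp X) {N : Set ℕ} (hN : N.Finite) (hxN : x ∉ N) (hNd : N.ncard ≤ d) :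
    mrk M.M (X ∪ starEdges x N) = mrk M.M X + N.ncard := by
  induction N, hN using Set.Finite.induction_on with
  | empty => simp [starEdges]
  | @insert u N huN hN ih =>
    have hxu : x ≠ u := fun h => hxN (h ▸ mem_insert x N)
    have hxN' : x ∉ N := fun h => hxN (mem_insert_of_mem u h)
    have hnew : s(x, u) ∉ X ∪ starEdges x N := by
      rintro (h | h)
      exacts [hx ⟨_, h, Sym2.mem_mk_left x u⟩, huN (mem_starEdges_iff.1 h)]
    rw [ncard_insert_of_notMem huN hN] at hNd ⊢
    rw [starEdges_insert, union_insert, mrk_insert_of_deg_lt hd (hX.union (starEdges_finite hN x))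
      (Sym2.mk_isDiag_iff.not.2 hxu) (Sym2.mem_mk_left x u) hnew
      (by rw [deg_union_starEdges hx]; omega), ih hxN' (by omega), add_assoc]

lemma IsThreshold.exists_isCircuit_ncard_nbhd (ht : M.IsThreshold d t) :
    ∃ C v, M.IsCircuit C ∧ (eSupp C).ncard = t + 1 ∧ v ∈ eSupp C ∧
      (nbhd C v).ncard = d + 1 := by
  obtain ⟨C, hC, hmin, hcard⟩ := ht.1
  obtain ⟨v, hv, hdeg⟩ := exists_deg_eq_minDeg (eSupp_nonempty hC.nonempty)
  exact ⟨C, v, hC, hcard, hv, by rw [← deg_eq_ncard_nbhd, hdeg, hmin]⟩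

lemma IsThreshold.lt (ht : M.IsThreshold d t) : d < t := by
  obtain ⟨C, v, hC, hcard, hv, hNB⟩ := ht.exists_isCircuit_ncard_nbhd
  have hVC : (eSupp C).Finite := eSupp_finite hC.1.1
  have := ncard_le_ncard (insert_subset hv (nbhd_subset_eSupp (v := v))) hVC
  rw [ncard_insert_of_notMem (notMem_nbhd_self hC.1.2) (hVC.subset nbhd_subset_eSupp)] at this
  omega

lemma mem_closure_clique_union_starEdges (ht : M.IsThreshold d t)
    {W N : Set ℕ} (hW : W.Finite) (htW : t ≤ W.ncard) {x w : ℕ} (hxW : x ∉ W) (hw : w ∈ W)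
    (hNW : N ⊆ W) (hNd : N.ncard = d) (hwN : w ∉ N) :
    s(x, w) ∈ M.M.closure (clique W ∪ starEdges x N) := by
  obtain ⟨C, v, hC, hcard, hv, hNB⟩ := ht.exists_isCircuit_ncard_nbhd
  obtain ⟨σ, hσv, hσNB, hσW⟩ := exists_perm_relabel (eSupp_finite hC.1.1) hW hv
    nbhd_subset_eSupp (notMem_nbhd_self hC.1.2) (insert_subset hw hNW) hxW
    (by rw [hNB, ncard_insert_of_notMem hwN (hW.subset hNW), hNd]) (by omega)
  obtain ⟨b, hb, hσb⟩ := hσNB.symm ▸ mem_insert w N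
  have hmem : s(x, w) ∈ Sym2.map σ '' C := ⟨s(v, b), hb, by rw [Sym2.map_mk, hσv, hσb]⟩
  have hsub : Sym2.map σ '' C ⊆ insert s(x, w) (clique W ∪ starEdges x N) :=
    calc Sym2.map σ '' C ⊆ Sym2.map σ '' (starEdges v (nbhd C v) ∪ clique (eSupp C \ {v})) :=
          image_mono (subset_starEdges_nbhd_union_clique hC.1.2 v)
      _ = starEdges x (insert w N) ∪ clique (σ '' (eSupp C \ {v})) := by
          rw [image_union, image_starEdges, image_clique σ.injective, hσv, hσNB]
      _ ⊆ insert s(x, w) (clique W ∪ starEdges x N) := by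
          rw [starEdges_insert, insert_union, union_comm]
          exact insert_subset_insert (union_subset_union_left _ (clique_mono hσW))
  exact M.M.closure_subset_closure (sdiff_subset_iff.2 (insert_eq _ _ ▸ hsub))
    ((isCircuit_iff.1 (hC.image σ)).mem_closure_sdiff_singleton_of_mem hmem)

lemma mrk_union_clique_insert (hd : M.IsDimensionality d) (ht : M.IsThreshold d t)
    (hX : X.Finite) (hW : W.Finite) (htW : t ≤ W.ncard) {x : ℕ} (hxW : x ∉ W)
    (hxX : x ∉ eSupp X) :
    mrk M.M (X ∪ clique (insert x W)) = mrk M.M (X ∪ clique W) + d := by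
  obtain ⟨N, hNW, hNd⟩ := exists_subset_card_eq (ht.lt.le.trans htW)
  have hNfin : N.Finite := hW.subset hNW
  have hA : (X ∪ clique W).Finite := hX.union (clique_finite hW)
  have hxA : x ∉ eSupp (X ∪ clique W) := by
    rw [eSupp_union]
    rintro (h | h)
    exacts [hxX h, hxW (eSupp_clique_subset W h)]
  have hspan : starEdges x W ⊆ M.M.closure (X ∪ clique W ∪ starEdges x N) := by
    rintro _ ⟨w, hw, rfl⟩
    by_cases hwN : w ∈ N
    · refine M.M.mem_closure_of_mem' (Or.inr ⟨w, hwN, rfl⟩) ?_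
      rw [M.ground_eq]
      exact starEdges_subset_ground hxW ⟨w, hw, rfl⟩
    · exact M.M.closure_subset_closure (union_subset_union_left _ subset_union_right)
        (mem_closure_clique_union_starEdges ht hW htW hxW hw hNW hNd hwN)
  calc mrk M.M (X ∪ clique (insert x W))
      = mrk M.M (X ∪ clique W ∪ starEdges x N ∪ starEdges x W) := by
        rw [clique_insert hxW, union_assoc (X ∪ clique W), ← union_assoc X,
          union_eq_self_of_subset_left (starEdges_mono x hNW)]
    _ = mrk M.M (X ∪ clique W ∪ starEdges x N) :=
        mrk_union_eq_of_subset_closure (hA.union (starEdges_finite hNfin x))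
          (starEdges_finite hW x) hspan
    _ = mrk M.M (X ∪ clique W) + d := by
        rw [mrk_union_starEdges hd hA hxA hNfin (fun h => hxW (hNW h)) hNd.le, hNd]

lemma mrk_union_clique_union (hd : M.IsDimensionality d) (ht : M.IsThreshold d t)
    (hX : X.Finite) (hW : W.Finite) (htW : t ≤ W.ncard) {F : Set ℕ} (hF : F.Finite)
    (hFW : Disjoint F W) (hFX : Disjoint F (eSupp X)) :
    mrk M.M (X ∪ clique (W ∪ F)) = mrk M.M (X ∪ clique W) + d * F.ncard := by
  induction F, hF using Set.Finite.induction_on with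
  | empty => simp
  | @insert y F hyF hF ih =>
    rw [disjoint_insert_left] at hFW hFX
    have hWF : (W ∪ F).ncard ≥ t := htW.trans (ncard_le_ncard subset_union_left (hW.union hF))
    rw [union_insert, mrk_union_clique_insert hd ht hX (hW.union hF) hWF
        (by rintro (h | h); exacts [hFW.1 h, hyF h]) hFX.1, ih hFW.2 hFX.2,
      ncard_insert_of_notMem hyF hF]
    ring

lemma rk_cliqueN_of_le (hd : M.IsDimensionality d) (ht : M.IsThreshold d t) {n : ℕ}
    (htn : t ≤ n) : M.rk (cliqueN n) = M.rk (cliqueN t) + d * (n - t) := by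
  have h := mrk_union_clique_union (M := M) hd ht finite_empty (finite_Iio t)
    (ncard_Iio_nat t).ge (finite_Ico t n)
    ((Iio_disjoint_Ici le_rfl).symm.mono_left Ico_subset_Ici_self)
    (by simp [eSupp])
  rwa [empty_union, empty_union, Iio_union_Ico_eq_Iio htn, ncard_Ico_nat] at h

lemma Unbounded.pos (hu : M.Unbounded) (hd : M.IsDimensionality d) (ht : M.IsThreshold d t) :
    0 < d := by
  by_contra! h0
  obtain ⟨n, hn⟩ := hu (M.rk (cliqueN t))
  rcases le_total n t with hnt | htn
  · exact hn.not_ge (mrk_mono (clique_finite (finite_Iio t))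
      (clique_mono (Iio_subset_Iio hnt)))
  · rw [rk_cliqueN_of_le hd ht htn, Nat.le_zero.1 h0, zero_mul, add_zero] at hn
    exact lt_irrefl _ hn

lemma mrk_lt_of_notMem_eSupp (hd : M.IsDimensionality d) (hdpos : 0 < d) {G X : Set (Sym2 ℕ)}
    (hG : IsGraph G) (hXG : X ⊆ G) {a : ℕ} (ha : a ∈ eSupp G) (haX : a ∉ eSupp X) :
    mrk M.M X < mrk M.M G := by
  obtain ⟨e, heG, hae⟩ := ha
  have h := mrk_insert_of_deg_lt hd (hG.1.subset hXG) (hG.2 e heG) hae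
    (fun h => haX ⟨e, h, hae⟩) (by rw [deg_eq_zero_of_notMem_eSupp haX]; exact hdpos)
  have := mrk_mono (M₀ := M.M) hG.1 (insert_subset heG hXG)
  omega

lemma le_rk_cliqueN_add_one (hd : M.IsDimensionality d) (hdpos : 0 < d) (n : ℕ) :
    n ≤ M.rk (cliqueN n) + 1 := by
  induction n with
  | zero => omega
  | succ n ih =>
    rcases Nat.eq_zero_or_pos n with rfl | hn
    · omega
    have hnew : n ∈ eSupp (cliqueN (n + 1)) :=
      ⟨s(n, 0), ⟨by simpa using hn.ne', by simp [Sym2.mem_iff]⟩, Sym2.mem_mk_left n 0⟩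
    have : M.rk (cliqueN n) < M.rk (cliqueN (n + 1)) :=
      mrk_lt_of_notMem_eSupp hd hdpos ⟨clique_finite (finite_Iio _), fun e he => he.1⟩
        (clique_mono (Iio_subset_Iio n.le_succ)) hnew
        (fun h => lt_irrefl n (mem_Iio.1 (eSupp_clique_subset (Iio n) h)))
    omega

lemma mrk_add_mrk_le (hd : M.IsDimensionality d) (ht : M.IsThreshold d t)
    {E₁ E₂ : Set (Sym2 ℕ)} (hE₁ : IsGraph E₁) (hE₂ : E₂.Finite) {S : Set ℕ}
    (hS : S.Finite) (hcap : eSupp E₁ ∩ eSupp E₂ ⊆ S) {k : ℕ} (hk : t ≤ k)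
    (hSk : S.ncard ≤ k) :
    mrk M.M E₁ + mrk M.M E₂ ≤ mrk M.M (E₁ ∪ E₂) + M.rk (cliqueN k) := by
  -- Enlarge `S` to a set `S'` of exactly `k ≥ t` vertices, and `S'` to a clique on `S' ∪ F`
  -- covering `E₁`; the new vertices `F` raise the ranks of `K(S')` and `E₂ ∪ K(S')` equally.
  obtain ⟨S', hSS', -, hS'k⟩ := infinite_univ.exists_superset_ncard_eq (subset_univ S) hS hSk
  have hS' : S'.Finite := finite_of_ncard_ne_zero (by have := ht.lt; omega)
  set F := eSupp E₁ \ S'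
  have hF : F.Finite := (eSupp_finite hE₁.1).sdiff
  have hFS' : Disjoint F S' := disjoint_sdiff_left
  have hFE₂ : Disjoint F (eSupp E₂) :=
    disjoint_left.2 fun z ⟨hz₁, hzS'⟩ hz₂ => hzS' (hSS' (hcap ⟨hz₁, hz₂⟩))
  have htS' : t ≤ S'.ncard := hS'k ▸ hk
  have hK₂ := mrk_union_clique_union (M := M) hd ht hE₂ hS' htS' hF hFS' hFE₂
  have hK₀ := mrk_union_clique_union (M := M) hd ht finite_empty hS' htS' hF hFS'
    (by simp [eSupp])
  rw [empty_union, empty_union] at hK₀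
  have hE₁K : E₁ ⊆ clique (S' ∪ F) := fun e he =>
    ⟨hE₁.2 e he, fun z hz => (em (z ∈ S')).elim Or.inl
      fun h => Or.inr ⟨⟨e, he, hz⟩, h⟩⟩
  have hK : (clique (S' ∪ F)).Finite := clique_finite (hS'.union hF)
  have hsub := mrk_union_add_mrk_inter_le (M₀ := M.M) (hE₁.1.union hE₂) hK
  rw [union_right_comm, union_eq_self_of_subset_left hE₁K, union_comm] at hsub
  have h₁ := mrk_mono (M₀ := M.M) (hE₁.1.union hE₂ |>.inter_of_left _)
    (subset_inter subset_union_left hE₁K)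
  have h₂ := mrk_mono (M₀ := M.M) (hE₂.union (clique_finite hS'))
    (subset_union_left (t := clique S'))
  rw [mrk_clique hS', hS'k] at hK₀
  omega

lemma not_verticallyConnected_of_separation (hd : M.IsDimensionality d)
    (ht : M.IsThreshold d t) {G E : Set (Sym2 ℕ)} (hG : IsGraph G) (hEG : E ⊆ G) {S : Set ℕ}
    (hS : S.Finite) (hcap : eSupp E ∩ eSupp (G \ E) ⊆ S) {k : ℕ} (hk : t ≤ k)
    (hSk : S.ncard ≤ k) (hE : mrk M.M E < mrk M.M G) (hGE : mrk M.M (G \ E) < mrk M.M G) :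
    ¬ VerticallyConnected (M.M.restrict G) (M.rk (cliqueN k) + 2) := by
  rintro ⟨-, hvc⟩
  have hunion : E ∪ G \ E = G := union_sdiff_cancel hEG
  have hfin : (G \ E).Finite := hG.1.sdiff
  have hle := mrk_union_le (M₀ := M.M) (hG.1.subset hEG) hfin
  have hglue := mrk_add_mrk_le (M := M) hd ht ⟨hG.1.subset hEG, fun e he => hG.2 e (hEG he)⟩
    hfin hS hcap hk hSk
  rw [hunion] at hle hglue
  refine hvc (mrk M.M E + mrk M.M (G \ E) + 1 - mrk M.M G) (by omega) (by omega)
    E (G \ E) ⟨disjoint_sdiff_right, hunion, ?_⟩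
  rw [Matroid.restrict_ground_eq, mrk_restrict hEG, mrk_restrict sdiff_subset,
    mrk_restrict subset_rfl]
  omega

lemma lt_ncard_eSupp (hd : M.IsDimensionality d) (ht : M.IsThreshold d t) (hdpos : 0 < d)
    {G : Set (Sym2 ℕ)} (hG : IsGraph G) {k : ℕ} (hk : t ≤ k)
    (hvc : VerticallyConnected (M.M.restrict G) (M.rk (cliqueN k) + 2)) :
    k + 1 < (eSupp G).ncard := by
  have hrG : M.rk (cliqueN k) + 2 ≤ mrk M.M G := by
    simpa only [Matroid.restrict_ground_eq, mrk_restrict subset_rfl] using hvc.1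
  by_contra! hV
  have hVfin := eSupp_finite hG.1
  obtain ⟨a, ha⟩ : (eSupp G).Nonempty := by
    have := mrk_le_ncard (M₀ := M.M) hG.1
    exact eSupp_nonempty (nonempty_of_ncard_ne_zero (by omega))
  have hS : (eSupp G \ {a}).ncard ≤ k := by
    rw [ncard_sdiff_singleton_of_mem ha]
    omega
  have hA : CutsOff G (eSupp G \ {a}) {a} := fun a' z haz _ hz =>
    by_contra fun h => hz ⟨⟨_, haz, Sym2.mem_mk_right a' z⟩, h⟩
  refine not_verticallyConnected_of_separation hd ht hG (fun _ he => he.1) hVfin.sdiff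
    (eSupp_deleteVerts_inter_subset hA) hk hS ?_ ?_ hvc
  · exact mrk_lt_of_notMem_eSupp hd hdpos hG (fun _ he => he.1) ha (notMem_eSupp_deleteVerts rfl)
  · have := le_rk_cliqueN_add_one hd hdpos (M := M) k
    calc mrk M.M (G \ deleteVerts G {a}) ≤ (G \ deleteVerts G {a}).ncard :=
          mrk_le_ncard hG.1.sdiff
      _ ≤ (starEdges a (eSupp G \ {a})).ncard := ncard_le_ncard
          (sdiff_deleteVerts_singleton_subset hG.2 a) (starEdges_finite hVfin.sdiff a)
      _ < mrk M.M G := by rw [ncard_starEdges]; unfold rk at *; omega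

end GraphMatroidFamily

theorem vertically_connected_to_connected_general (M : GraphMatroidFamily) (d t : ℕ)
    (hu : M.Unbounded)
    (hd : M.IsDimensionality d) (ht : M.IsThreshold d t)
    (G : Set (Sym2 ℕ)) (hG : IsGraph G) (k : ℕ) (hk : t ≤ k)
    (hvc : VerticallyConnected (M.M.restrict G) (M.rk (cliqueN k) + 2)) :
    KConnected (k + 1) G := by
  have hdpos := hu.pos hd ht
  have hV := M.lt_ncard_eSupp hd ht hdpos hG hk hvc
  refine ⟨hV, fun S hS => ?_⟩
  have hne : (eSupp G \ ↑S).Nonempty := sdiff_nonempty.2 fun h => by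
    have := ncard_le_ncard h S.finite_toSet
    rw [ncard_coe_finset] at this
    omega
  refine (SimpleGraph.connected_iff _).2 ⟨by_contra fun hpc => ?_, hne.to_subtype⟩
  obtain ⟨A, u, huS, v, hvS, huA, hvA, hA⟩ := exists_cutsOff_of_not_preconnected hpc
  refine M.not_verticallyConnected_of_separation hd ht hG (fun _ he => he.1) S.finite_toSet
    (eSupp_deleteVerts_inter_subset hA) hk (by rw [ncard_coe_finset]; omega) ?_ ?_ hvc
  · exact GraphMatroidFamily.mrk_lt_of_notMem_eSupp hd hdpos hG (fun _ he => he.1) huS.1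
      (notMem_eSupp_deleteVerts huA)
  · exact GraphMatroidFamily.mrk_lt_of_notMem_eSupp hd hdpos hG sdiff_subset hvS.1
      fun h => (eSupp_sdiff_deleteVerts_subset hA h).elim hvA hvS.2

/-- Let `G` be a graph (without isolated vertices) and `M` a
nontrivial, unbounded graph matroid family with rank function `r`, dimensionality `d`,
and threshold `t`.  Let `k ≥ t`.  If `M(G)` is vertically `(r(K_k) + 2)`-connected,
then `G` is `(k+1)`-connected. -/
theorem vertically_connected_to_connected (M : GraphMatroidFamily) (d t : ℕ)
    (hu : M.Unbounded) (hnt : ¬ M.Trivial)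
    (hd : M.IsDimensionality d) (ht : M.IsThreshold d t)
    (G : Set (Sym2 ℕ)) (hG : IsGraph G) (k : ℕ) (hk : t ≤ k)
    (hvc : VerticallyConnected (M.M.restrict G) (M.rk (cliqueN k) + 2)) :
    KConnected (k + 1) G :=
  vertically_connected_to_connected_general M d t hu hd ht G hG k hk hvc
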